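/- Let d ≥ 2, let x = (x_1,…,x_d) be a random vector, and let Y = f(x) be square-integrable. Suppose there exist measurable functions g and h with x_1 = g(x_2) almost surely and x_2 = h(x_1) almost surely. Then the Shapley values of variables 1 and 2 for the game val(u) = Var(E[Y | x_u]) are equal: φ_1 = φ_2. -/

import Mathlib

/-!
Since `x₁ = g(x₂)` a.s., the variable `x₁` adds nothing up to null sets to any σ-algebra already
containing `x₂`, so `E[Y | x_{u ∪ {1,2}}] = E[Y | x_{u ∪ {2}}]` a.s., and symmetrically with the
roles of `x₁` and `x₂` exchanged. Hence `val (u ∪ {1}) = val (u ∪ {2})` for every `u`, and the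
Shapley values agree by the symmetry property of the Shapley value.
-/

open Finset MeasureTheory ProbabilityTheory

/-- The Shapley value of player `j` for the cooperative game `val` on subsets of `Fin d`. -/
noncomputable def shapley {d : ℕ} (val : Finset (Fin d) → ℝ) (j : Fin d) : ℝ :=
  (d : ℝ)⁻¹ * ∑ u ∈ (Finset.univ.erase j).powerset,
    ((Nat.choose (d - 1) u.card : ℝ))⁻¹ * (val (insert j u) - val u)

/-- The σ-algebra generated by the variables `x j`, `j ∈ u`. -/
def mGen {Ω : Type*} {d : ℕ} (x : Fin d → Ω → ℝ) (u : Finset (Fin d)) :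
    MeasurableSpace Ω :=
  ⨆ j ∈ u, MeasurableSpace.comap (x j) Real.measurableSpace

theorem shapley_eq_of_insert_eq {d : ℕ} {val : Finset (Fin d) → ℝ} {i j : Fin d}
    (h : ∀ u, i ∉ u → j ∉ u → val (insert i u) = val (insert j u)) :
    shapley val i = shapley val j := by
  rcases eq_or_ne i j with rfl | hij
  · rfl
  set R := (univ.erase i).erase j with hR
  have hiR : i ∉ R := by simp [R]
  have hjR : j ∉ R := by simp [R]
  have hi : univ.erase i = insert j R := (insert_erase (by simp [hij.symm])).symm
  have hj : univ.erase j = insert i R := by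
    rw [hR, erase_right_comm]; exact (insert_erase (by simp [hij])).symm
  unfold shapley
  -- split each sum according to whether the coalition contains the other player
  rw [hi, hj, sum_powerset_insert hjR, sum_powerset_insert hiR]
  have hnotMem : ∀ w ∈ R.powerset, i ∉ w ∧ j ∉ w := fun w hw =>
    ⟨fun hiw => hiR (mem_powerset.1 hw hiw), fun hjw => hjR (mem_powerset.1 hw hjw)⟩
  congr 1
  refine congrArg₂ (· + ·) (sum_congr rfl fun w hw => ?_) (sum_congr rfl fun w hw => ?_)
  all_goals obtain ⟨hiw, hjw⟩ := hnotMem w hw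
  · rw [h w hiw hjw]
  · rw [card_insert_of_notMem hjw, card_insert_of_notMem hiw, insert_comm, h w hiw hjw]

section

variable {Ω : Type*} {m₀ : MeasurableSpace Ω} {μ : Measure Ω}

theorem exists_ae_eq_of_measurableSet_sup {m m' : MeasurableSpace Ω}
    (h : ∀ s, MeasurableSet[m'] s → ∃ t, MeasurableSet[m] t ∧ s =ᵐ[μ] t)
    {s : Set Ω} (hs : MeasurableSet[m' ⊔ m] s) : ∃ t, MeasurableSet[m] t ∧ s =ᵐ[μ] t := by
  rw [MeasurableSpace.measurableSet_sup] at hs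
  induction hs with
  | basic s hs =>
    rcases hs with hs | hs
    · exact h s hs
    · exact ⟨s, hs, .rfl⟩
  | empty => exact ⟨∅, @MeasurableSet.empty _ m, .rfl⟩
  | compl s _ ih =>
    obtain ⟨t, ht, hst⟩ := ih
    exact ⟨tᶜ, ht.compl, hst.compl⟩
  | iUnion f _ ih =>
    choose t ht hft using ih
    exact ⟨⋃ n, t n, .iUnion ht, Filter.EventuallyEq.countable_iUnion hft⟩

theorem exists_ae_eq_of_measurableSet_comap_of_ae_eq_comp {α β : Type*} [mα : MeasurableSpace α]
    [mβ : MeasurableSpace β] {X : Ω → α} {Z : Ω → β} {g : β → α} (hg : Measurable g)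
    (hX : X =ᵐ[μ] g ∘ Z) {s : Set Ω} (hs : MeasurableSet[mα.comap X] s) :
    ∃ t, MeasurableSet[mβ.comap Z] t ∧ s =ᵐ[μ] t := by
  obtain ⟨B, hB, rfl⟩ := hs
  refine ⟨Z ⁻¹' (g ⁻¹' B), ⟨g ⁻¹' B, hg hB, rfl⟩, ?_⟩
  filter_upwards [hX] with ω hω
  exact congrArg (· ∈ B) hω

theorem condExp_ae_eq_of_forall_exists_ae_eq [IsFiniteMeasure μ] {m₁ m₂ : MeasurableSpace Ω}
    (hm₁₂ : m₁ ≤ m₂) (hm₂ : m₂ ≤ m₀)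
    (h : ∀ s, MeasurableSet[m₂] s → ∃ t, MeasurableSet[m₁] t ∧ s =ᵐ[μ] t)
    {E : Type*} [NormedAddCommGroup E] [NormedSpace ℝ E] [CompleteSpace E] (f : Ω → E) :
    μ[f | m₂] =ᵐ[μ] μ[f | m₁] := by
  by_cases hf : Integrable f μ
  swap
  · simp [condExp_of_not_integrable hf]
  refine (ae_eq_condExp_of_forall_setIntegral_eq hm₂ hf
    (fun s _ _ => integrable_condExp.integrableOn) (fun s hs _ => ?_)
    (stronglyMeasurable_condExp.mono hm₁₂).aestronglyMeasurable).symm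
  obtain ⟨t, ht, hst⟩ := h s hs
  calc ∫ ω in s, (μ[f | m₁]) ω ∂μ = ∫ ω in t, (μ[f | m₁]) ω ∂μ := setIntegral_congr_set hst
    _ = ∫ ω in t, f ω ∂μ := setIntegral_condExp (hm₁₂.trans hm₂) hf ht
    _ = ∫ ω in s, f ω ∂μ := (setIntegral_congr_set hst).symm

variable {d : ℕ} {x : Fin d → Ω → ℝ}

theorem mGen_insert (j : Fin d) (u : Finset (Fin d)) :
    mGen x (insert j u) = MeasurableSpace.comap (x j) Real.measurableSpace ⊔ mGen x u :=
  iSup_insert j u _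

theorem comap_le_mGen {i : Fin d} {u : Finset (Fin d)} (hi : i ∈ u) :
    MeasurableSpace.comap (x i) Real.measurableSpace ≤ mGen x u :=
  le_iSup₂ (f := fun j (_ : j ∈ u) => MeasurableSpace.comap (x j) Real.measurableSpace) i hi

theorem mGen_le (hx : ∀ j, Measurable (x j)) (u : Finset (Fin d)) : mGen x u ≤ m₀ :=
  iSup₂_le fun j _ => (hx j).comap_le

theorem condExp_mGen_insert_ae_eq [IsFiniteMeasure μ] (hx : ∀ j, Measurable (x j))
    {g : ℝ → ℝ} (hg : Measurable g) {i j : Fin d} (hji : x j =ᵐ[μ] g ∘ x i)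
    {u : Finset (Fin d)} (hi : i ∈ u) (Y : Ω → ℝ) :
    μ[Y | mGen x (insert j u)] =ᵐ[μ] μ[Y | mGen x u] := by
  refine condExp_ae_eq_of_forall_exists_ae_eq (mGen_insert j u ▸ le_sup_right) (mGen_le hx _)
    (fun s hs => ?_) Y
  rw [mGen_insert] at hs
  refine exists_ae_eq_of_measurableSet_sup (fun s hs => ?_) hs
  obtain ⟨t, ht, hst⟩ := exists_ae_eq_of_measurableSet_comap_of_ae_eq_comp hg hji hs
  exact ⟨t, comap_le_mGen hi t ht, hst⟩

end

/-- If two input variables determine each other almost surely (there is an almost-sure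
bijection between them), then they have the same Shapley value for the game
`val u = Var(E[Y ∣ x_u])`. -/
theorem shapley_eq_of_bijection
    {Ω : Type*} [m0 : MeasurableSpace Ω] (μ : Measure Ω) [IsProbabilityMeasure μ]
    (d : ℕ) (hd : 2 ≤ d) (x : Fin d → Ω → ℝ) (hx : ∀ j, Measurable (x j))
    (Y : Ω → ℝ)
    (g h : ℝ → ℝ) (hg : Measurable g) (hh : Measurable h)
    (hgx : (fun ω => x ⟨0, by omega⟩ ω) =ᵐ[μ] fun ω => g (x ⟨1, by omega⟩ ω))
    (hhx : (fun ω => x ⟨1, by omega⟩ ω) =ᵐ[μ] fun ω => h (x ⟨0, by omega⟩ ω)) :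
    shapley (fun u => variance (μ[Y | mGen x u]) μ) ⟨0, by omega⟩
      = shapley (fun u => variance (μ[Y | mGen x u]) μ) ⟨1, by omega⟩ := by
  refine shapley_eq_of_insert_eq fun u _ _ => ?_
  calc variance (μ[Y | mGen x (insert ⟨0, _⟩ u)]) μ
      = variance (μ[Y | mGen x (insert ⟨1, _⟩ (insert ⟨0, _⟩ u))]) μ :=
        (variance_congr (condExp_mGen_insert_ae_eq hx hh hhx (mem_insert_self _ _) Y)).symm
    _ = variance (μ[Y | mGen x (insert ⟨0, _⟩ (insert ⟨1, _⟩ u))]) μ := by rw [insert_comm]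
    _ = variance (μ[Y | mGen x (insert ⟨1, _⟩ u)]) μ :=
        variance_congr (condExp_mGen_insert_ae_eq hx hg hgx (mem_insert_self _ _) Y)
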